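/- arXiv:1806.07717 — 9 statements merged into one kernel-verified Lean document; each statement's English description precedes it below -/
import Mathlib

section
/- Let D be a weighted ADF. Every preferred interpretation of D is complete: if v is ≤-maximal among the admissible interpretations of D, then Γ_D(v) = v. -/
/-- A weighted abstract dialectical framework over statements `S` and truth
values `Vu = V ∪ {u}`, where `u` is the designated least "undefined" value and
`V` consists of the elements of `Vu` different from `u`. -/
structure WADF (S : Type) (Vu : Type) [PartialOrder Vu] where
  /-- the undefined truth value -/
  u : Vu
  /-- `u` is the least element of the information ordering -/
  u_least : ∀ x : Vu, u ≤ x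
  /-- greatest lower bound operator on sets of truth values -/
  glb : Set Vu → Vu
  /-- `glb` is a greatest lower bound for every nonempty set -/
  glb_spec : ∀ X : Set Vu, X.Nonempty → IsGLB X (glb X)
  /-- every chain of truth values has a least upper bound -/
  lub_chain : ∀ X : Set Vu, IsChain (· ≤ ·) X → ∃ y : Vu, IsLUB X y
  /-- acceptance conditions -/
  C : S → (S → Vu) → Vu
  /-- acceptance conditions map total interpretations to values in `V` -/
  C_val : ∀ (s : S) (w : S → Vu), (∀ t, w t ≠ u) → C s w ≠ u
  /-- every partial interpretation has at least one completion -/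
  compl_ne : ∀ v : S → Vu, ∃ w : S → Vu, (∀ t, w t ≠ u) ∧ v ≤ w

namespace WADF

variable {S Vu : Type} [PartialOrder Vu] (D : WADF S Vu)

/-- a total interpretation maps every statement into `V` -/
def IsTotal (w : S → Vu) : Prop := ∀ t, w t ≠ D.u

/-- the set of completions of a partial interpretation -/
def completions (v : S → Vu) : Set (S → Vu) := {w | D.IsTotal w ∧ v ≤ w}

/-- the characteristic operator -/
def Γ (v : S → Vu) : S → Vu :=
  fun s => D.glb {x : Vu | ∃ w ∈ D.completions v, D.C s w = x}

/-- admissible interpretations -/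
def Admissible (v : S → Vu) : Prop := v ≤ D.Γ v

/-- complete interpretations (fixpoints of the characteristic operator) -/
def Complete (v : S → Vu) : Prop := D.Γ v = v

/-- preferred interpretations: maximal admissible ones -/
def Preferred (v : S → Vu) : Prop :=
  D.Admissible v ∧ ∀ w : S → Vu, D.Admissible w → v ≤ w → w = v

/-- models: total complete interpretations -/
def IsModel (v : S → Vu) : Prop := D.IsTotal v ∧ D.Complete v

/-- the information ordering is flat -/
def Flat : Prop := ∀ x y : Vu, x ≤ y ↔ x = D.u ∨ x = y

end WADF

/-- every preferred interpretation is complete. -/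
theorem wadf_preferred_complete {S Vu : Type} [PartialOrder Vu] (D : WADF S Vu)
    (v : S → Vu) (hadm : D.Admissible v)
    (hmax : ∀ w : S → Vu, D.Admissible w → v ≤ w → w = v) :
    D.Γ v = v := by
  have hmono : ∀ a b : S → Vu, a ≤ b → D.Γ a ≤ D.Γ b := by
    intro a b hab s
    have hsub : {x : Vu | ∃ w ∈ D.completions b, D.C s w = x} ⊆
        {x : Vu | ∃ w ∈ D.completions a, D.C s w = x} := by
      rintro x ⟨w, ⟨hw1, hw2⟩, hw3⟩
      exact ⟨w, ⟨hw1, le_trans hab hw2⟩, hw3⟩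
    have hne : ∀ c : S → Vu, ({x : Vu | ∃ w ∈ D.completions c, D.C s w = x}).Nonempty := by
      intro c
      obtain ⟨w, hw1, hw2⟩ := D.compl_ne c
      exact ⟨D.C s w, w, ⟨hw1, hw2⟩, rfl⟩
    have h1 := D.glb_spec _ (hne a)
    have h2 := D.glb_spec _ (hne b)
    exact h2.2 (fun x hx => h1.1 (hsub hx))
  have h2 : D.Admissible (D.Γ v) := hmono v (D.Γ v) hadm
  exact hmax (D.Γ v) h2 hadm
end

section
/- Let D be a weighted ADF. The characteristic operator Γ_D has a least fixpoint: there exists a complete interpretation v_g of D (the grounded interpretation) such that v_g ≤ v (pointwise) for every complete interpretation v of D. -/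
namespace WADF

variable {S Vu : Type} [PartialOrder Vu] (D : WADF S Vu)

lemma vals_nonempty (v : S → Vu) (s : S) :
    {x : Vu | ∃ w ∈ D.completions v, D.C s w = x}.Nonempty := by
  obtain ⟨w, hw, hv⟩ := D.compl_ne v
  exact ⟨D.C s w, w, ⟨hw, hv⟩, rfl⟩

lemma Γ_mono {v v' : S → Vu} (h : v ≤ v') : D.Γ v ≤ D.Γ v' := by
  intro s
  have h1 := D.glb_spec _ (D.vals_nonempty v s)
  have h2 := D.glb_spec _ (D.vals_nonempty v' s)
  refine h2.2 ?_
  rintro x ⟨w, ⟨hw, hvw⟩, rfl⟩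
  exact h1.1 ⟨w, ⟨hw, le_trans h hvw⟩, rfl⟩

end WADF

/-- the characteristic operator has a least fixpoint, the grounded
interpretation, which is the least complete interpretation. -/
theorem wadf_grounded_exists {S Vu : Type} [PartialOrder Vu] (D : WADF S Vu) :
    ∃ vg : S → Vu, D.Complete vg ∧ ∀ v : S → Vu, D.Complete v → vg ≤ v := by
  classical
  set A : Set (S → Vu) :=
    {v | v ≤ D.Γ v ∧ ∀ w : S → Vu, D.Complete w → v ≤ w} with hA
  have hbot : (fun _ : S => D.u) ∈ A := by
    constructor
    · intro s; exact D.u_least _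
    · intro w _ s; exact D.u_least _
  -- chains in A have upper bounds in A
  have hchain : ∀ c ⊆ A, IsChain (· ≤ ·) c → ∀ y ∈ c,
      ∃ ub ∈ A, ∀ z ∈ c, z ≤ ub := by
    intro c hcA hc y hy
    -- pointwise lub
    have hpt : ∀ s : S, ∃ x : Vu, IsLUB {x | ∃ f ∈ c, f s = x} x := by
      intro s
      apply D.lub_chain
      rintro _ ⟨f, hf, rfl⟩ _ ⟨g, hg, rfl⟩ hne
      rcases hc.total hf hg with h | h
      · exact Or.inl (h s)
      · exact Or.inr (h s)
    choose L hL using hpt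
    have hub : ∀ f ∈ c, f ≤ L := by
      intro f hf s
      exact (hL s).1 ⟨f, hf, rfl⟩
    have hLle : ∀ g : S → Vu, (∀ f ∈ c, f ≤ g) → L ≤ g := by
      intro g hg s
      refine (hL s).2 ?_
      rintro _ ⟨f, hf, rfl⟩
      exact hg f hf s
    refine ⟨L, ⟨?_, ?_⟩, hub⟩
    · -- L ≤ Γ L
      apply hLle
      intro f hf
      exact le_trans (hcA hf).1 (D.Γ_mono (hub f hf))
    · intro w hw
      exact hLle w fun f hf => (hcA hf).2 w hw
  obtain ⟨m, -, hmA, hmax⟩ := zorn_le_nonempty₀ A hchain _ hbot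
  have hfix : D.Γ m = m := by
    have hΓA : D.Γ m ∈ A := by
      constructor
      · exact D.Γ_mono hmA.1
      · intro w hw
        calc D.Γ m ≤ D.Γ w := D.Γ_mono (hmA.2 w hw)
          _ = w := hw
    exact le_antisymm (hmax hΓA hmA.1) hmA.1
  exact ⟨m, hfix, hmA.2⟩
end

section
/- Let D be a weighted ADF. The set of complete interpretations of D forms a complete meet-semilattice with respect to the pointwise information ordering ≤: every nonempty set X of complete interpretations has a greatest lower bound within the set of complete interpretations (i.e., there is a complete interpretation that is the ≤-greatest among the complete interpretations that are lower bounds of X), and every chain of complete interpretations has a least upper bound within the set of complete interpretations. -/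
namespace WADF

variable {S Vu : Type} [PartialOrder Vu]

/-- Γ is monotone. -/
lemma gamma_mono (D : WADF S Vu) : Monotone D.Γ := by
  intro v v' hvv' s
  have hsub : {x : Vu | ∃ w ∈ D.completions v', D.C s w = x} ⊆
      {x : Vu | ∃ w ∈ D.completions v, D.C s w = x} := by
    rintro x ⟨w, ⟨hw1, hw2⟩, rfl⟩
    exact ⟨w, ⟨hw1, le_trans hvv' hw2⟩, rfl⟩
  have hne : ∀ u : S → Vu, {x : Vu | ∃ w ∈ D.completions u, D.C s w = x}.Nonempty := by
    intro u
    obtain ⟨w, hw1, hw2⟩ := D.compl_ne u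
    exact ⟨D.C s w, w, ⟨hw1, hw2⟩, rfl⟩
  have h1 := D.glb_spec _ (hne v)
  have h2 := D.glb_spec _ (hne v')
  exact h2.2 fun x hx => h1.1 (hsub hx)

/-- pointwise glb of a nonempty set of interpretations -/
lemma pi_glb (D : WADF S Vu) (W : Set (S → Vu)) (h : W.Nonempty) : ∃ g : S → Vu, IsGLB W g := by
  refine ⟨fun s => D.glb ((fun w => w s) '' W), ?_, ?_⟩
  · intro w hw s
    exact (D.glb_spec _ (h.image _)).1 ⟨w, hw, rfl⟩
  · intro c hc s
    refine (D.glb_spec _ (h.image _)).2 ?_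
    rintro x ⟨w, hw, rfl⟩
    exact hc hw s

/-- every set of interpretations bounded above has a lub -/
lemma pi_lub_bdd (D : WADF S Vu) (A : Set (S → Vu)) (h : (upperBounds A).Nonempty) :
    ∃ g : S → Vu, IsLUB A g := by
  obtain ⟨g, hg⟩ := D.pi_glb (upperBounds A) h
  exact ⟨g, fun a ha => hg.2 fun c hc => hc ha, hg.1⟩

/-- every chain of interpretations has a lub -/
lemma pi_lub_chain (D : WADF S Vu) (W : Set (S → Vu)) (h : IsChain (· ≤ ·) W) :
    ∃ g : S → Vu, IsLUB W g := by
  have hch : ∀ s : S, IsChain (· ≤ ·) ((fun w => w s) '' W) := by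
    rintro s _ ⟨p, hp, rfl⟩ _ ⟨q, hq, rfl⟩ hne
    rcases eq_or_ne p q with rfl | hpq
    · exact absurd rfl hne
    · rcases h hp hq hpq with h' | h'
      · exact Or.inl (h' s)
      · exact Or.inr (h' s)
  choose f hf using fun s => D.lub_chain _ (hch s)
  refine ⟨f, ?_, ?_⟩
  · intro w hw s
    exact (hf s).1 ⟨w, hw, rfl⟩
  · intro c hc s
    refine (hf s).2 ?_
    rintro x ⟨w, hw, rfl⟩
    exact hc hw s

end WADF

/-- the complete interpretations form a complete meet-semilattice:
every nonempty set of complete interpretations has a greatest lower bound among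
the complete interpretations, and every chain of complete interpretations has a
least upper bound among the complete interpretations. -/
theorem wadf_complete_meet_semilattice {S Vu : Type} [PartialOrder Vu]
    (D : WADF S Vu) :
    (∀ X : Set {v : S → Vu // D.Complete v}, X.Nonempty →
        ∃ g : {v : S → Vu // D.Complete v}, IsGLB X g) ∧
    (∀ X : Set {v : S → Vu // D.Complete v}, IsChain (· ≤ ·) X →
        ∃ g : {v : S → Vu // D.Complete v}, IsLUB X g) := by
  have hmono := D.gamma_mono
  constructor
  · -- glb part
    intro X hX
    set X' : Set (S → Vu) := Subtype.val '' X with hX'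
    obtain ⟨p, hp⟩ := D.pi_glb X' (hX.image _)
    -- p is a pre-fixpoint
    have hΓp : D.Γ p ≤ p := by
      refine hp.2 ?_
      rintro _ ⟨⟨x, hx⟩, hxX, rfl⟩
      calc D.Γ p ≤ D.Γ x := hmono (hp.1 ⟨⟨x, hx⟩, hxX, rfl⟩)
        _ = x := hx
    -- A : post-fixpoints below p
    set A : Set (S → Vu) := {v | v ≤ D.Γ v ∧ v ≤ p} with hA
    obtain ⟨g, hg⟩ := D.pi_lub_bdd A ⟨p, fun v hv => hv.2⟩
    have hgp : g ≤ p := hg.2 fun v hv => hv.2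
    have hgA : g ∈ A := by
      refine ⟨hg.2 fun v hv => le_trans hv.1 (hmono (hg.1 hv)), hgp⟩
    have hΓgA : D.Γ g ∈ A := ⟨hmono hgA.1, le_trans (hmono hgp) hΓp⟩
    have hfix : D.Complete g := le_antisymm (hg.1 hΓgA) hgA.1
    refine ⟨⟨g, hfix⟩, ?_, ?_⟩
    · rintro ⟨x, hx⟩ hxX
      show g ≤ x
      exact le_trans hgp (hp.1 ⟨⟨x, hx⟩, hxX, rfl⟩)
    · rintro ⟨c, hc⟩ hcl
      have hcp : c ≤ p := hp.2 (by rintro _ ⟨y, hyX, rfl⟩; exact hcl hyX)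
      exact hg.1 ⟨le_of_eq hc.symm, hcp⟩
  · -- chain lub part
    intro X hX
    set X' : Set (S → Vu) := Subtype.val '' X with hX'
    have hchain : IsChain (· ≤ ·) X' := by
      rintro _ ⟨x, hx, rfl⟩ _ ⟨y, hy, rfl⟩ hne
      rcases eq_or_ne x y with rfl | hxy
      · exact absurd rfl hne
      · rcases hX hx hy (fun h => hxy h) with h | h
        · exact Or.inl h
        · exact Or.inr h
    obtain ⟨q, hq⟩ := D.pi_lub_chain X' hchain
    -- q is a post-fixpoint
    have hqΓ : q ≤ D.Γ q := by
      refine hq.2 ?_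
      rintro _ ⟨⟨x, hx⟩, hxX, rfl⟩
      calc x = D.Γ x := hx.symm
        _ ≤ D.Γ q := hmono (hq.1 ⟨⟨x, hx⟩, hxX, rfl⟩)
    -- post-fixpoints above q; Zorn gives a maximal one, which is a fixpoint
    set P : Set (S → Vu) := {v | q ≤ v ∧ v ≤ D.Γ v} with hP
    have hqP : q ∈ P := ⟨le_refl q, hqΓ⟩
    have hzorn : ∀ c ⊆ P, IsChain (· ≤ ·) c → ∀ y ∈ c, ∃ ub ∈ P, ∀ z ∈ c, z ≤ ub := by
      intro c hcP hc y hy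
      obtain ⟨ub, hub⟩ := D.pi_lub_chain c hc
      refine ⟨ub, ⟨le_trans (hcP hy).1 (hub.1 hy), ?_⟩, fun z hz => hub.1 hz⟩
      exact hub.2 fun v hv => le_trans (hcP hv).2 (hmono (hub.1 hv))
    obtain ⟨m, _, hm⟩ := zorn_le_nonempty₀ P hzorn q hqP
    have hmfix : D.Complete m := by
      have h1 : D.Γ m ∈ P := ⟨le_trans hm.1.1 hm.1.2, hmono hm.1.2⟩
      exact le_antisymm (hm.2 h1 hm.1.2).ge hm.1.2
    -- B : pre-fixpoints above q; nonempty since m ∈ B; its glb is a fixpoint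
    set B : Set (S → Vu) := {v | q ≤ v ∧ D.Γ v ≤ v} with hB
    have hmB : m ∈ B := ⟨hm.1.1, le_of_eq hmfix⟩
    obtain ⟨t, ht⟩ := D.pi_glb B ⟨m, hmB⟩
    have hqt : q ≤ t := ht.2 fun v hv => hv.1
    have hΓt : D.Γ t ≤ t := ht.2 fun v hv => le_trans (hmono (ht.1 hv)) hv.2
    have hΓtB : D.Γ t ∈ B := ⟨le_trans hqΓ (hmono hqt), hmono hΓt⟩
    have htfix : D.Complete t := le_antisymm hΓt (ht.1 hΓtB)
    refine ⟨⟨t, htfix⟩, ?_, ?_⟩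
    · rintro ⟨x, hx⟩ hxX
      show x ≤ t
      exact le_trans (hq.1 ⟨⟨x, hx⟩, hxX, rfl⟩) hqt
    · rintro ⟨c, hc⟩ hcu
      have hqc : q ≤ c := hq.2 (by rintro _ ⟨y, hyX, rfl⟩; exact hcu hyX)
      exact ht.1 ⟨hqc, le_of_eq hc⟩
end

section
/- Let D be a weighted ADF such that every strictly ascending chain v_1 < v_2 < … of partial interpretations under the pointwise information ordering is finite. Then there exists n ∈ ℕ such that the n-fold application Γ_D^n(v_u) of the characteristic operator to the interpretation v_u (which maps every statement to u) is the grounded interpretation of D, i.e., the least fixpoint of Γ_D. -/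
lemma wadf_gamma_mono {S Vu : Type} [PartialOrder Vu] (D : WADF S Vu)
    {v v' : S → Vu} (h : v ≤ v') : D.Γ v ≤ D.Γ v' := by
  intro s
  have hsub : {x : Vu | ∃ w ∈ D.completions v', D.C s w = x} ⊆
      {x : Vu | ∃ w ∈ D.completions v, D.C s w = x} := by
    rintro x ⟨w, ⟨hw, hle⟩, rfl⟩
    exact ⟨w, ⟨hw, le_trans h hle⟩, rfl⟩
  obtain ⟨w, hw, hle⟩ := D.compl_ne v'
  have hne' : ({x : Vu | ∃ w ∈ D.completions v', D.C s w = x}).Nonempty :=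
    ⟨D.C s w, w, ⟨hw, hle⟩, rfl⟩
  have hne : ({x : Vu | ∃ w ∈ D.completions v, D.C s w = x}).Nonempty :=
    hne'.mono hsub
  exact (D.glb_spec _ hne').2 (fun x hx => (D.glb_spec _ hne).1 (hsub hx))

/-- if every strictly ascending chain of partial interpretations is
finite, then some finite iterate of the characteristic operator starting from the
everywhere-undefined interpretation is the grounded interpretation (the least
fixpoint of the characteristic operator). -/
theorem wadf_grounded_by_iteration {S Vu : Type} [PartialOrder Vu]
    (D : WADF S Vu)
    (hacc : ¬ ∃ f : ℕ → (S → Vu), StrictMono f) :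
    ∃ n : ℕ,
      D.Γ ((D.Γ)^[n] (fun _ => D.u)) = (D.Γ)^[n] (fun _ => D.u) ∧
      ∀ w : S → Vu, D.Γ w = w → (D.Γ)^[n] (fun _ => D.u) ≤ w := by
  
  set g : ℕ → (S → Vu) := fun n => (D.Γ)^[n] (fun _ => D.u) with hg
  have hbot : ∀ v : S → Vu, (fun _ => D.u) ≤ v := fun v t => D.u_least _
  have hstep : ∀ n, g n ≤ g (n + 1) := by
    intro n
    induction n with
    | zero => exact hbot _
    | succ k ih =>
        have : g (k+1) = D.Γ (g k) := by
          simp [hg, Function.iterate_succ_apply']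
        have h2 : g (k+2) = D.Γ (g (k+1)) := by
          simp [hg, Function.iterate_succ_apply']
        rw [this, h2]
        exact wadf_gamma_mono D ih
  have : ∃ n, g (n+1) = g n := by
    by_contra hno
    push_neg at hno
    exact hacc ⟨g, strictMono_nat_of_lt_succ fun n =>
      lt_of_le_of_ne (hstep n) (fun h => hno n h.symm)⟩
  obtain ⟨n, hn⟩ := this
  refine ⟨n, ?_, ?_⟩
  · have : g (n+1) = D.Γ (g n) := by
      simp [hg, Function.iterate_succ_apply']
    rw [← this, hn]
  · intro w hw
    have : ∀ k, g k ≤ w := by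
      intro k
      induction k with
      | zero => exact hbot _
      | succ m ih =>
          have : g (m+1) = D.Γ (g m) := by
            simp [hg, Function.iterate_succ_apply']
          rw [this, ← hw]
          exact wadf_gamma_mono D ih
    exact this n
end

section
/- Let D be a weighted ADF with a parent function par : S → 𝒫(S) such that each acceptance condition C_s depends only on the parents of s (i.e., C_s(w) = C_s(w') whenever total interpretations w and w' agree on par(s)), and suppose D is acyclic with finite depth, i.e., there exists a function d : S → ℕ such that d(p) < d(s) for every s ∈ S and every p ∈ par(s). Then D has exactly one complete interpretation v; consequently v is the grounded interpretation of D and the unique preferred interpretation of D. -/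
section Aux

variable {S Vu : Type} [PartialOrder Vu]

/-- the set of possible acceptance-condition values at `s` over totals dominating
`v` on the parents of `s` -/
def Xset (D : WADF S Vu) (par : S → Set S) (v : S → Vu) (s : S) : Set Vu :=
  {x | ∃ w, D.IsTotal w ∧ (∀ p ∈ par s, v p ≤ w p) ∧ D.C s w = x}

lemma Xset_nonempty (D : WADF S Vu) (par : S → Set S) (v : S → Vu) (s : S) :
    (Xset D par v s).Nonempty := by
  obtain ⟨w, hw, hvw⟩ := D.compl_ne v
  exact ⟨D.C s w, w, hw, fun p _ => hvw p, rfl⟩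

lemma Gamma_eq (D : WADF S Vu) (par : S → Set S)
    (hpar : ∀ (s : S) (w w' : S → Vu), D.IsTotal w → D.IsTotal w' →
      (∀ p ∈ par s, w p = w' p) → D.C s w = D.C s w')
    (v : S → Vu) (s : S) : D.Γ v s = D.glb (Xset D par v s) := by
  classical
  refine congrArg D.glb ?_
  ext x
  constructor
  · rintro ⟨w, ⟨hw, hvw⟩, rfl⟩
    exact ⟨w, hw, fun p _ => hvw p, rfl⟩
  · rintro ⟨w, hw, hpw, rfl⟩
    obtain ⟨w₁, hw₁, hvw₁⟩ := D.compl_ne v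
    refine ⟨fun t => if t ∈ par s then w t else w₁ t, ⟨?_, ?_⟩, ?_⟩
    · intro t; dsimp only; split
      · exact hw t
      · exact hw₁ t
    · intro t; dsimp only; split
      · next h => exact hpw t h
      · exact hvw₁ t
    · refine hpar s _ w ?_ hw ?_
      · intro t; dsimp only; split
        · exact hw t
        · exact hw₁ t
      · intro p hp; simp [hp]

/-- the grounded interpretation of an acyclic wADF, defined by recursion on depth -/
noncomputable def gr (D : WADF S Vu) (par : S → Set S) (d : S → ℕ)
    (hd : ∀ s : S, ∀ p ∈ par s, d p < d s) : S → Vu :=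
  fun s => D.glb {x | ∃ w, D.IsTotal w ∧
    (∀ p ∈ par s, gr D par d hd p ≤ w p) ∧ D.C s w = x}
termination_by s => d s
decreasing_by exact hd _ _ (by assumption)

lemma gr_eq (D : WADF S Vu) (par : S → Set S) (d : S → ℕ)
    (hd : ∀ s : S, ∀ p ∈ par s, d p < d s) (s : S) :
    gr D par d hd s = D.glb (Xset D par (gr D par d hd) s) := by
  rw [gr.eq_def]
  rfl

end Aux

/-- an acyclic wADF (with a depth function witnessing acyclicity,
and acceptance conditions depending only on parents) has exactly one complete
interpretation, which is consequently the grounded interpretation and the unique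
preferred interpretation. -/
theorem wadf_acyclic_unique_complete {S Vu : Type} [PartialOrder Vu]
    (D : WADF S Vu) (par : S → Set S) (d : S → ℕ)
    (hpar : ∀ (s : S) (w w' : S → Vu), D.IsTotal w → D.IsTotal w' →
      (∀ p ∈ par s, w p = w' p) → D.C s w = D.C s w')
    (hd : ∀ s : S, ∀ p ∈ par s, d p < d s) :
    ∃ v : S → Vu,
      D.Complete v ∧
      (∀ w : S → Vu, D.Complete w → w = v) ∧
      (∀ w : S → Vu, D.Complete w → v ≤ w) ∧
      D.Preferred v ∧
      (∀ w : S → Vu, D.Preferred w → w = v) := by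
  set g : S → Vu := gr D par d hd with hg
  have hgreq : ∀ s : S, g s = D.glb (Xset D par g s) := gr_eq D par d hd
  -- g is a fixpoint of Γ
  have hcomp : D.Complete g := by
    funext s
    rw [Gamma_eq D par hpar g s, ← hgreq s]
  -- any complete interpretation equals g
  have huniq : ∀ w : S → Vu, D.Complete w → w = g := by
    intro w hw
    have key : ∀ n : ℕ, ∀ s : S, d s < n → w s = g s := by
      intro n
      induction n with
      | zero => intro s hs; omega
      | succ n ih =>
        intro s hs
        have hws : w s = D.glb (Xset D par w s) := by
          rw [← Gamma_eq D par hpar w s, hw]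
        have hgs : g s = D.glb (Xset D par g s) := hgreq s
        have hXeq : Xset D par w s = Xset D par g s := by
          have hag : ∀ p ∈ par s, w p = g p := fun p hp =>
            ih p (by have := hd s p hp; omega)
          unfold Xset
          ext x
          constructor
          · rintro ⟨w', hw', hle, rfl⟩
            exact ⟨w', hw', fun p hp => (hag p hp) ▸ hle p hp, rfl⟩
          · rintro ⟨w', hw', hle, rfl⟩
            exact ⟨w', hw', fun p hp => (hag p hp) ▸ hle p hp, rfl⟩
        rw [hws, hgs, hXeq]
    funext s
    exact key (d s + 1) s (by omega)
  -- any admissible interpretation is below g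
  have hadm_le : ∀ w : S → Vu, D.Admissible w → w ≤ g := by
    intro w hw
    have key : ∀ n : ℕ, ∀ s : S, d s < n → w s ≤ g s := by
      intro n
      induction n with
      | zero => intro s hs; omega
      | succ n ih =>
        intro s hs
        have h1 : w s ≤ D.Γ w s := hw s
        rw [Gamma_eq D par hpar w s] at h1
        have hsub : Xset D par g s ⊆ Xset D par w s := by
          rintro x ⟨w', hw', hle, rfl⟩
          refine ⟨w', hw', fun p hp => le_trans ?_ (hle p hp), rfl⟩
          exact ih p (by have := hd s p hp; omega)
        have hglbw := D.glb_spec _ (Xset_nonempty D par w s)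
        have hglbg := D.glb_spec _ (Xset_nonempty D par g s)
        have h2 : D.glb (Xset D par w s) ≤ D.glb (Xset D par g s) :=
          hglbg.2 (fun x hx => hglbw.1 (hsub hx))
        rw [hgreq s]
        exact le_trans h1 h2
    intro s
    exact key (d s + 1) s (by omega)
  have hadm : D.Admissible g := le_of_eq hcomp.symm
  refine ⟨g, hcomp, huniq, fun w hw => le_of_eq (huniq w hw).symm, ⟨hadm, ?_⟩, ?_⟩
  · intro w hw hle
    exact le_antisymm (hadm_le w hw) hle
  · intro w hw
    exact (hw.2 g hadm (hadm_le w hw.1)).symm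
end

section
/- A constant-free propositional formula φ over a set S of atoms is a classical tautology (satisfied by every assignment v : S → {t, f}) if and only if the fuzzy evaluation satisfies ŵ(φ) ≥ 1/2 for every w : S → [0,1]. -/
/-- Propositional formulas over a set `S` of atoms, with real constants and the
connectives `∧`, `∨`, `¬`. -/
inductive Fml (S : Type) where
  | atom : S → Fml S
  | const : ℝ → Fml S
  | conj : Fml S → Fml S → Fml S
  | disj : Fml S → Fml S → Fml S
  | neg : Fml S → Fml S

/-- Fuzzy evaluation of a formula under a real-valued assignment of the atoms:
`∧` is min, `∨` is max, `¬` is `1 - ·`, constants evaluate to themselves. -/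
def feval {S : Type} (w : S → ℝ) : Fml S → ℝ
  | .atom a => w a
  | .const c => c
  | .conj φ ψ => min (feval w φ) (feval w ψ)
  | .disj φ ψ => max (feval w φ) (feval w ψ)
  | .neg φ => 1 - feval w φ

open scoped Classical in
/-- Classical two-valued evaluation of a formula under a Boolean assignment of
the atoms (the constant `1` is identified with true, `0` with false). -/
noncomputable def ceval {S : Type} (v : S → Bool) : Fml S → Bool
  | .atom a => v a
  | .const c => if 1 ≤ c then true else false
  | .conj φ ψ => ceval v φ && ceval v ψ
  | .disj φ ψ => ceval v φ || ceval v ψ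
  | .neg φ => ! ceval v φ

/-- A formula is constant-free if it contains no constants. -/
def ConstFree {S : Type} : Fml S → Prop
  | .atom _ => True
  | .const _ => False
  | .conj φ ψ => ConstFree φ ∧ ConstFree ψ
  | .disj φ ψ => ConstFree φ ∧ ConstFree ψ
  | .neg φ => ConstFree φ

/-!
Under the rounding `v s := (1/2 ≤ w s)`, the connectives `min`, `max`, `1 - ·` respect the side of
`1/2` on which a value lies, so a tautology has fuzzy value `≥ 1/2` everywhere. Conversely, on
`{0,1}`-valued assignments the fuzzy evaluation is the classical one, so a falsifying Boolean
assignment has fuzzy value `0`.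
-/

/-- Both sides contain `1/2`, the fixed point of `1 - ·`, so the relation survives negation. -/
def HalfSide (b : Bool) (x : ℝ) : Prop :=
  cond b (1 / 2 ≤ x) (x ≤ 1 / 2)

lemma halfSide_min {a b : Bool} {x y : ℝ} (hx : HalfSide a x) (hy : HalfSide b y) :
    HalfSide (a && b) (min x y) := by
  cases a <;> cases b <;> simp_all [HalfSide]

lemma halfSide_max {a b : Bool} {x y : ℝ} (hx : HalfSide a x) (hy : HalfSide b y) :
    HalfSide (a || b) (max x y) := by
  cases a <;> cases b <;> simp_all [HalfSide]

lemma halfSide_one_sub {a : Bool} {x : ℝ} (hx : HalfSide a x) : HalfSide (!a) (1 - x) := by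
  cases a <;> simp only [HalfSide, Bool.not_false, Bool.not_true, cond_true, cond_false] at hx ⊢ <;>
    linarith

lemma halfSide_decide (x : ℝ) : HalfSide (decide (1 / 2 ≤ x)) x := by
  rcases le_or_gt (1 / 2) x with h | h
  · rwa [HalfSide, decide_eq_true h, cond_true]
  · rw [HalfSide, decide_eq_false h.not_ge, cond_false]
    exact h.le

lemma halfSide_feval {S : Type} {v : S → Bool} {w : S → ℝ} (hvw : ∀ s, HalfSide (v s) (w s))
    {φ : Fml S} (hφ : ConstFree φ) : HalfSide (ceval v φ) (feval w φ) := by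
  induction φ with
  | atom a => exact hvw a
  | const c => exact hφ.elim
  | conj φ ψ ihφ ihψ => exact halfSide_min (ihφ hφ.1) (ihψ hφ.2)
  | disj φ ψ ihφ ihψ => exact halfSide_max (ihφ hφ.1) (ihψ hφ.2)
  | neg φ ih => exact halfSide_one_sub (ih hφ)

lemma feval_cond_one_zero {S : Type} (v : S → Bool) {φ : Fml S} (hφ : ConstFree φ) :
    feval (fun s => cond (v s) 1 0) φ = cond (ceval v φ) 1 0 := by
  induction φ with
  | atom a => rfl
  | const c => exact hφ.elim
  | conj φ ψ ihφ ihψ =>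
    simp only [feval, ceval, ihφ hφ.1, ihψ hφ.2]
    cases ceval v φ <;> cases ceval v ψ <;> norm_num
  | disj φ ψ ihφ ihψ =>
    simp only [feval, ceval, ihφ hφ.1, ihψ hφ.2]
    cases ceval v φ <;> cases ceval v ψ <;> norm_num
  | neg φ ih =>
    simp only [feval, ceval, ih hφ]
    cases ceval v φ <;> norm_num

/-- a constant-free formula is a classical tautology iff its fuzzy
value is at least `1/2` under every assignment of the atoms into `[0,1]`. -/
theorem tautology_iff_fuzzy_ge_half {S : Type} (φ : Fml S) (hφ : ConstFree φ) :
    (∀ v : S → Bool, ceval v φ = true) ↔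
    (∀ w : S → ℝ, (∀ s, w s ∈ Set.Icc (0:ℝ) 1) → 1/2 ≤ feval w φ) := by
  constructor
  · intro htaut w _
    have := halfSide_feval (fun s => halfSide_decide (w s)) hφ
    rwa [htaut] at this
  · intro hfuzzy v
    have hcrisp := hfuzzy (fun s => cond (v s) 1 0) fun s => by cases v s <;> norm_num
    rw [feval_cond_one_zero v hφ] at hcrisp
    revert hcrisp
    cases ceval v φ <;> norm_num
end

section
/- Let D be the weighted ADF over V = [0,1] with flat information ordering whose acceptance conditions are given by propositional formulas φ_s containing no constants other than 0 or 1, evaluated by the fuzzy evaluation (C_s(w) = ŵ(φ_s)), and let D' be its classical version: the weighted ADF over V' = {0, 1} with flat information ordering and the same formulas, where evaluation over {0, 1} is the two-valued classical one identifying 1 with true and 0 with false. Let v be a partial interpretation assigning only values in {0, 1, u}, and let s ∈ S. If Γ_D(v)(s) ∈ {0, 1}, then Γ_{D'}(v)(s) ∈ {0, 1}. -/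
/-- Constants occurring in the formula are only `0` or `1`. -/
def ConstZeroOne {S : Type} : Fml S → Prop
  | .atom _ => True
  | .const c => c = 0 ∨ c = 1
  | .conj φ ψ => ConstZeroOne φ ∧ ConstZeroOne ψ
  | .disj φ ψ => ConstZeroOne φ ∧ ConstZeroOne ψ
  | .neg φ => ConstZeroOne φ

/-- Completions, under the flat information ordering on `[0,1] ∪ {u}`
(with `none` playing the role of `u`), of a partial interpretation `v`:
total interpretations into `[0,1]` agreeing with `v` wherever `v` is defined. -/
def FuzzyCompl {S : Type} (v : S → Option ℝ) (w : S → ℝ) : Prop :=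
  (∀ s, w s ∈ Set.Icc (0:ℝ) 1) ∧ ∀ s, ∀ y : ℝ, v s = some y → w s = y

/-- Completions, under the flat information ordering on `{0,1} ∪ {u}`, of a
partial interpretation `v` whose defined values lie in `{0,1}`: total Boolean
interpretations agreeing with `v` wherever `v` is defined (identifying `1` with
true and `0` with false). -/
def BoolCompl {S : Type} (v : S → Option ℝ) (b : S → Bool) : Prop :=
  ∀ s, (v s = some 1 → b s = true) ∧ (v s = some 0 → b s = false)

/-!
Read a Boolean completion of `v` as a `{0,1}`-valued assignment: it is then a fuzzy completion
of `v`, and on such assignments the fuzzy evaluation of a formula with constants in `{0,1}` is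
just its classical evaluation. Hence the common fuzzy value of `φ s` fixes the classical one.
-/

def Bool.toReal (b : Bool) : ℝ := if b then 1 else 0

@[simp] lemma Bool.toReal_true : true.toReal = 1 := rfl

@[simp] lemma Bool.toReal_false : false.toReal = 0 := rfl

lemma Bool.toReal_mem_Icc (b : Bool) : b.toReal ∈ Set.Icc (0 : ℝ) 1 := by
  cases b <;> norm_num

lemma Bool.toReal_injective : Function.Injective Bool.toReal := by
  rintro (_ | _) (_ | _) <;> norm_num

lemma feval_comp_toReal {S : Type} (a : S → Bool) {φ : Fml S} (h : ConstZeroOne φ) :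
    feval (Bool.toReal ∘ a) φ = (ceval a φ).toReal := by
  induction φ with
  | atom t => rfl
  | const c => rcases h with rfl | rfl <;> norm_num [feval, ceval]
  | conj p q ihp ihq =>
    rw [feval, ceval, ihp h.1, ihq h.2]
    cases ceval a p <;> cases ceval a q <;> norm_num
  | disj p q ihp ihq =>
    rw [feval, ceval, ihp h.1, ihq h.2]
    cases ceval a p <;> cases ceval a q <;> norm_num
  | neg p ihp =>
    rw [feval, ceval, ihp h]
    cases ceval a p <;> norm_num

lemma fuzzyCompl_comp_toReal {S : Type} {v : S → Option ℝ}
    (hv : ∀ s, v s = none ∨ v s = some 0 ∨ v s = some 1) {a : S → Bool}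
    (ha : BoolCompl v a) : FuzzyCompl v (Bool.toReal ∘ a) := by
  refine ⟨fun t => (a t).toReal_mem_Icc, fun t y hy => ?_⟩
  rcases hv t with h | h | h <;> rw [h] at hy <;> cases hy
  · simp [(ha t).2 h]
  · simp [(ha t).1 h]

/-- let `D` be the wADF over `[0,1]` with flat information
ordering whose acceptance conditions are given by fuzzy evaluation of formulas
`φ s` (with constants only `0` or `1`), and `D'` its classical version over
`{0,1}`. For a partial interpretation `v` with values in `{0,1,u}` and a
statement `s`: if `Γ_D(v)(s) ∈ {0,1}` (i.e. all fuzzy completions of `v`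
evaluate `φ s` to one and the same value `x ∈ {0,1}`, so that the flat greatest
lower bound is `x`), then `Γ_{D'}(v)(s) ∈ {0,1}` (i.e. all classical completions
of `v` evaluate `φ s` to one and the same Boolean value). -/
theorem fuzzy_gamma_defined_implies_classical {S : Type} (φ : S → Fml S)
    (hc : ∀ s, ConstZeroOne (φ s))
    (v : S → Option ℝ)
    (hv : ∀ s, v s = none ∨ v s = some 0 ∨ v s = some 1) (s : S) :
    (∃ x : ℝ, (x = 0 ∨ x = 1) ∧
        ∀ w : S → ℝ, FuzzyCompl v w → feval w (φ s) = x) →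
    (∃ b : Bool, ∀ a : S → Bool, BoolCompl v a → ceval a (φ s) = b) := by
  rintro ⟨x, hx01, hx⟩
  obtain ⟨b, rfl⟩ : ∃ b : Bool, b.toReal = x := by
    rcases hx01 with rfl | rfl
    exacts [⟨false, rfl⟩, ⟨true, rfl⟩]
  refine ⟨b, fun a ha => Bool.toReal_injective ?_⟩
  rw [← feval_comp_toReal a (hc s)]
  exact hx _ (fuzzyCompl_comp_toReal hv ha)
end

section
/- Let D be the weighted ADF over V = [0,1] with flat information ordering whose acceptance conditions are given by propositional formulas φ_s containing no constants other than 0 or 1, evaluated by the fuzzy evaluation (C_s(w) = ŵ(φ_s)), and let D' be its classical version: the weighted ADF over V' = {0, 1} with flat information ordering and the same formulas, where evaluation over {0, 1} is the two-valued classical one identifying 1 with true and 0 with false. Let v be a partial interpretation assigning only values in {0, 1, u}, and let s ∈ S. If Γ_{D'}(v)(s) = u, then Γ_D(v)(s) = u. -/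
/-! A classical interpretation, read as the `{0,1}`-valued fuzzy interpretation it denotes, is
evaluated by `min`, `max` and `1 - ·` exactly as by `∧`, `∨` and `¬`, provided the only
constants are `0` and `1`. Embedding two classical completions of `v` that disagree on `φ s`
therefore yields two fuzzy completions of `v` that disagree on `φ s`. -/

def realOfBool {S : Type} (b : S → Bool) : S → ℝ := fun t => if b t then 1 else 0

lemma feval_realOfBool {S : Type} (b : S → Bool) {ψ : Fml S} (hψ : ConstZeroOne ψ) :
    feval (realOfBool b) ψ = if ceval b ψ then 1 else 0 := by
  induction ψ with
  | atom t => rfl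
  | const c => rcases hψ with rfl | rfl <;> norm_num [feval, ceval]
  | conj ψ₁ ψ₂ ih₁ ih₂ =>
      simp only [feval, ceval, ih₁ hψ.1, ih₂ hψ.2]
      split_ifs <;> simp_all
  | disj ψ₁ ψ₂ ih₁ ih₂ =>
      simp only [feval, ceval, ih₁ hψ.1, ih₂ hψ.2]
      split_ifs <;> simp_all
  | neg ψ ih =>
      simp only [feval, ceval, ih hψ]
      split_ifs <;> simp_all

lemma fuzzyCompl_realOfBool {S : Type} {v : S → Option ℝ}
    (hv : ∀ s, v s = none ∨ v s = some 0 ∨ v s = some 1) {b : S → Bool} (hb : BoolCompl v b) :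
    FuzzyCompl v (realOfBool b) := by
  refine ⟨fun t => ?_, fun t y hy => ?_⟩
  · unfold realOfBool
    split <;> norm_num
  · rcases hv t with h | h | h <;> rw [h] at hy <;> cases hy
    · simp [realOfBool, (hb t).2 h]
    · simp [realOfBool, (hb t).1 h]

/-- let `D` be the wADF over `[0,1]` with flat information
ordering whose acceptance conditions are given by fuzzy evaluation of formulas
`φ s` (with constants only `0` or `1`), and `D'` its classical version over
`{0,1}`. For a partial interpretation `v` with values in `{0,1,u}` and a
statement `s`: if `Γ_{D'}(v)(s) = u` (i.e. two classical completions of `v`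
evaluate `φ s` differently, so that the flat greatest lower bound is `u`), then
`Γ_D(v)(s) = u` (i.e. two fuzzy completions of `v` evaluate `φ s`
differently). -/
theorem classical_gamma_undefined_implies_fuzzy {S : Type} (φ : S → Fml S)
    (hc : ∀ s, ConstZeroOne (φ s))
    (v : S → Option ℝ)
    (hv : ∀ s, v s = none ∨ v s = some 0 ∨ v s = some 1) (s : S) :
    (∃ a a' : S → Bool, BoolCompl v a ∧ BoolCompl v a' ∧
        ceval a (φ s) ≠ ceval a' (φ s)) →
    (∃ w w' : S → ℝ, FuzzyCompl v w ∧ FuzzyCompl v w' ∧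
        feval w (φ s) ≠ feval w' (φ s)) := by
  rintro ⟨a, a', ha, ha', hne⟩
  refine ⟨_, _, fuzzyCompl_realOfBool hv ha, fuzzyCompl_realOfBool hv ha', ?_⟩
  rw [feval_realOfBool a (hc s), feval_realOfBool a' (hc s)]
  cases h : ceval a (φ s) <;> cases h' : ceval a' (φ s) <;> simp_all
end

section
/- Let ψ be a constant-free propositional formula over a finite set B of atoms, and let x ∈ ℝ with 0 < x < 1/2. Let D be the weighted ADF over V = [0,1] with flat information ordering, statements S = B ∪ {t} (t ∉ B), and acceptance conditions C_b(w) = w(b) for b ∈ B and C_t(w) = min(ŵ(ψ), x), where ŵ is the fuzzy evaluation. Then the partial interpretation v with v(b) = u for all b ∈ B and v(t) = x is admissible in D if and only if ψ is a classical tautology. -/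
/-- Admissibility (`v ≤ Γ_D(v)`) for a wADF `D` over `[0,1]` with flat
information ordering and acceptance conditions `C`: under the flat ordering,
`v s ≤ Γ_D(v)(s)` holds iff `v s = u` or the flat greatest lower bound
`Γ_D(v)(s)` equals `v s`, i.e. iff every completion of `v` evaluates the
acceptance condition of `s` to the value `v s`. -/
def FlatAdmissible {S : Type} (C : S → (S → ℝ) → ℝ) (v : S → Option ℝ) : Prop :=
  ∀ s, ∀ y : ℝ, v s = some y → ∀ w : S → ℝ, FuzzyCompl v w → C s w = y

/-! A tautology evaluates to at least `1/2` under every fuzzy assignment, because rounding the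
atoms at `1/2` turns the fuzzy evaluation into the classical one without crossing `1/2`;
so `min (ŵ ψ) x = x` on every completion. Conversely, a falsifying Boolean assignment, read as a
`{0,1}`-valued completion, gives `ŵ ψ = 0` and hence `min (ŵ ψ) x = 0 ≠ x`. -/

theorem ConstFree.constZeroOne {S : Type} : ∀ {φ : Fml S}, ConstFree φ → ConstZeroOne φ
  | .atom _, _ => trivial
  | .conj _ _, h => ⟨h.1.constZeroOne, h.2.constZeroOne⟩
  | .disj _ _, h => ⟨h.1.constZeroOne, h.2.constZeroOne⟩
  | .neg φ, h => ConstFree.constZeroOne (φ := φ) h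

theorem feval_boolIndicator {S : Type} (a : S → Bool) {φ : Fml S} (hφ : ConstZeroOne φ) :
    feval (fun s => if a s then 1 else 0) φ = if ceval a φ then 1 else 0 := by
  induction φ with
  | atom s => rfl
  | const c => rcases hφ with rfl | rfl <;> norm_num [feval, ceval]
  | conj φ ψ ihφ ihψ =>
    rw [feval, ceval, ihφ hφ.1, ihψ hφ.2]
    cases ceval a φ <;> cases ceval a ψ <;> norm_num
  | disj φ ψ ihφ ihψ =>
    rw [feval, ceval, ihφ hφ.1, ihψ hφ.2]
    cases ceval a φ <;> cases ceval a ψ <;> norm_num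
  | neg φ ih =>
    rw [feval, ceval, ih hφ]
    cases ceval a φ <;> norm_num

theorem feval_roundHalf {S : Type} (w : S → ℝ) {φ : Fml S} (hφ : ConstZeroOne φ) :
    (ceval (fun s => decide (1 / 2 ≤ w s)) φ = true → 1 / 2 ≤ feval w φ) ∧
      (ceval (fun s => decide (1 / 2 ≤ w s)) φ = false → feval w φ ≤ 1 / 2) := by
  induction φ with
  | atom s => simpa [ceval, feval] using le_of_lt
  | const c => rcases hφ with rfl | rfl <;> norm_num [feval, ceval]
  | conj φ ψ ihφ ihψ =>
    obtain ⟨hφt, hφf⟩ := ihφ hφ.1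
    obtain ⟨hψt, hψf⟩ := ihψ hφ.2
    simp only [feval, ceval, Bool.and_eq_true, Bool.and_eq_false_iff, le_min_iff, min_le_iff]
    exact ⟨fun h => ⟨hφt h.1, hψt h.2⟩, fun h => h.imp hφf hψf⟩
  | disj φ ψ ihφ ihψ =>
    obtain ⟨hφt, hφf⟩ := ihφ hφ.1
    obtain ⟨hψt, hψf⟩ := ihψ hφ.2
    simp only [feval, ceval, Bool.or_eq_true, Bool.or_eq_false_iff, le_max_iff, max_le_iff]
    exact ⟨fun h => h.imp hφt hψt, fun h => ⟨hφf h.1, hψf h.2⟩⟩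
  | neg φ ih =>
    obtain ⟨ht, hf⟩ := ih hφ
    simp only [feval, ceval, Bool.not_eq_true', Bool.not_eq_false']
    constructor <;> intro h
    · linarith [hf h]
    · linarith [ht h]

section SingleDefined

variable {S : Type} {v : S → Option ℝ} {t : S} {x : ℝ}

theorem eq_and_eq_of_single_defined (hv : ∀ s, s ≠ t → v s = none) (hvt : v t = some x)
    {s : S} {y : ℝ} (hy : v s = some y) : s = t ∧ y = x := by
  obtain rfl : s = t := by_contra fun hs => by simp [hv s hs] at hy
  exact ⟨rfl, Option.some_inj.mp (hy.symm.trans hvt)⟩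

theorem fuzzyCompl_iff_of_single_defined (hv : ∀ s, s ≠ t → v s = none) (hvt : v t = some x)
    (w : S → ℝ) : FuzzyCompl v w ↔ (∀ s, w s ∈ Set.Icc (0 : ℝ) 1) ∧ w t = x := by
  refine and_congr_right fun _ => ⟨fun h => h t x hvt, fun h s y hy => ?_⟩
  obtain ⟨rfl, rfl⟩ := eq_and_eq_of_single_defined hv hvt hy
  exact h

theorem flatAdmissible_iff_of_single_defined (C : S → (S → ℝ) → ℝ)
    (hv : ∀ s, s ≠ t → v s = none) (hvt : v t = some x) :
    FlatAdmissible C v ↔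
      ∀ w : S → ℝ, (∀ s, w s ∈ Set.Icc (0 : ℝ) 1) → w t = x → C t w = x := by
  simp only [FlatAdmissible, fuzzyCompl_iff_of_single_defined hv hvt, and_imp]
  refine ⟨fun h => h t x hvt, fun h s y hy => ?_⟩
  obtain ⟨rfl, rfl⟩ := eq_and_eq_of_single_defined hv hvt hy
  exact h

end SingleDefined

theorem admissible_iff_tautology_general {B : Type}
    (ψ : Fml B) (hψ : ConstFree ψ) (x : ℝ) (hx0 : 0 < x) (hx1 : x < 1/2)
    (C : Option B → (Option B → ℝ) → ℝ)
    (hCt : ∀ w : Option B → ℝ,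
      C none w = min (feval (fun b => w (some b)) ψ) x)
    (v : Option B → Option ℝ)
    (hvb : ∀ b : B, v (some b) = none)
    (hvt : v none = some x) :
    FlatAdmissible C v ↔ ∀ a : B → Bool, ceval a ψ = true := by
  have hv : ∀ s, s ≠ none → v s = none := fun s hs => by
    obtain ⟨b, rfl⟩ := Option.ne_none_iff_exists'.mp hs
    exact hvb b
  rw [flatAdmissible_iff_of_single_defined C hv hvt]
  constructor
  · intro hadm a
    by_contra hfalse
    let w : Option B → ℝ := fun s => s.elim x fun b => if a b then 1 else 0
    have hw : ∀ s, w s ∈ Set.Icc (0 : ℝ) 1 := by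
      rintro (_ | b)
      · exact show x ∈ Set.Icc (0 : ℝ) 1 from ⟨hx0.le, by linarith⟩
      · dsimp only [w, Option.elim]; split <;> norm_num
    have h : min (feval (fun b => if a b then 1 else 0) ψ) x = x := hCt w ▸ hadm w hw rfl
    rw [feval_boolIndicator a hψ.constZeroOne, if_neg hfalse, min_eq_left hx0.le] at h
    exact hx0.ne h
  · intro htaut w _ _
    have hhalf := (feval_roundHalf (fun b => w (some b)) hψ.constZeroOne).1 (htaut _)
    rw [hCt, min_eq_right (by linarith)]

/-- let `ψ` be a constant-free formula over a finite set `B` of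
atoms, `0 < x < 1/2`, and `D` the wADF over `[0,1]` with flat information
ordering, statements `B ∪ {t}` (where `t ∉ B` is modeled by `none : Option B`),
acceptance conditions `C_b(w) = w(b)` for `b ∈ B` and
`C_t(w) = min(ŵ(ψ), x)`. Then the partial interpretation `v` with `v(b) = u`
for all `b ∈ B` and `v(t) = x` is admissible in `D` iff `ψ` is a classical
tautology. -/
theorem admissible_iff_tautology {B : Type} [Fintype B]
    (ψ : Fml B) (hψ : ConstFree ψ) (x : ℝ) (hx0 : 0 < x) (hx1 : x < 1/2)
    (C : Option B → (Option B → ℝ) → ℝ)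
    (hCb : ∀ (b : B) (w : Option B → ℝ), C (some b) w = w (some b))
    (hCt : ∀ w : Option B → ℝ,
      C none w = min (feval (fun b => w (some b)) ψ) x)
    (v : Option B → Option ℝ)
    (hvb : ∀ b : B, v (some b) = none)
    (hvt : v none = some x) :
    FlatAdmissible C v ↔ ∀ a : B → Bool, ceval a ψ = true :=
  admissible_iff_tautology_general ψ hψ x hx0 hx1 C hCt v hvb hvt
end
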